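/- arXiv:2009.09033 — 2 statements merged into one kernel-verified Lean document; each statement's English description precedes it below -/
import Mathlib

section
/- Let C be an extended Choquet cone and let K ⊆ C be a nonempty closed convex subset. Then the map x ↦ ε(x) attains a maximum on K: there exists x₀ ∈ K such that ε(x) ≤ ε(x₀) for all x ∈ K. -/
open scoped ENNReal NNReal

/-- The positive real numbers, used as scalars for cones. -/
abbrev PosReal : Type := {t : ℝ // 0 < t}

/-- An extended Choquet cone: an algebraically ordered topological cone that is a lattice
under the algebraic order, with addition distributing over `⊓` and `⊔`, whose topology is
compact, Hausdorff and locally convex. -/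
class ECCone (C : Type*) extends AddCommMonoid C, Lattice C, TopologicalSpace C where
  psmul : PosReal → C → C
  psmul_add : ∀ (t : PosReal) (x y : C), psmul t (x + y) = psmul t x + psmul t y
  add_psmul : ∀ (s t : PosReal) (x : C), psmul (s + t) x = psmul s x + psmul t x
  psmul_mul : ∀ (s t : PosReal) (x : C), psmul s (psmul t x) = psmul (s * t) x
  one_psmul : ∀ x : C, psmul 1 x = x
  psmul_zero : ∀ t : PosReal, psmul t 0 = 0
  le_iff_exists_add : ∀ x y : C, x ≤ y ↔ ∃ z, x + z = y
  add_inf_distrib : ∀ x y z : C, x + (y ⊓ z) = (x + y) ⊓ (x + z)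
  add_sup_distrib : ∀ x y z : C, x + (y ⊔ z) = (x + y) ⊔ (x + z)
  continuous_add' : Continuous fun p : C × C => p.1 + p.2
  continuous_psmul : Continuous fun p : PosReal × C => psmul p.1 p.2
  compact : CompactSpace C
  t2 : T2Space C
  locally_convex : ∀ (x : C) (U : Set C), IsOpen U → x ∈ U →
    ∃ V : Set C, IsOpen V ∧ x ∈ V ∧ V ⊆ U ∧
      ∀ y ∈ V, ∀ z ∈ V, ∀ s t : PosReal, s.1 + t.1 = 1 → psmul s y + psmul t z ∈ V

/-- The way-below relation for functions into `[0,∞]`, relative to a set `S` of functions: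
`f ≪ g` iff for every increasing sequence in `S` whose pointwise supremum dominates `g`,
some term of the sequence dominates `f`. -/
def FWayBelow {α : Type*} (S : Set (α → ℝ≥0∞)) (f g : α → ℝ≥0∞) : Prop :=
  ∀ h : ℕ → α → ℝ≥0∞, (∀ n, h n ∈ S) → Monotone h → (∀ a, g a ≤ ⨆ n, h n a) → ∃ n, f ≤ h n

namespace ECCone

variable {C : Type*} [ECCone C]

/-- `w` is an idempotent: `2w = w`. -/
def IsIdem (w : C) : Prop := w + w = w

/-- `e` is the support idempotent of `x`: the maximum of `{z : x + z = x}`. -/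
def IsSuppIdem (x e : C) : Prop := x + e = x ∧ ∀ z : C, x + z = x → z ≤ e

/-- `w₁ ≫ w₂` in the lattice of idempotents with the opposite order: whenever a nonempty
downward directed family of idempotents has an infimum `≤ w₂`, some member is `≤ w₁`. -/
def IdemWayBelow (w₁ w₂ : C) : Prop :=
  ∀ D : Set C, D.Nonempty → (∀ v ∈ D, IsIdem v) → DirectedOn (· ≥ ·) D →
    ∀ m : C, IsGLB D m → m ≤ w₂ → ∃ v ∈ D, v ≤ w₁

/-- A compact idempotent: `w ≫ w`. -/
def IsCompactIdem (w : C) : Prop := IsIdem w ∧ IdemWayBelow w w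

/-- `v` is compact relative to `w`: whenever a nonempty downward directed family of
idempotents has an infimum `≤ v`, some member `u` satisfies `u ⊓ w ≤ v`. -/
def CompactRelTo (v w : C) : Prop :=
  ∀ D : Set C, D.Nonempty → (∀ u ∈ D, IsIdem u) → DirectedOn (· ≥ ·) D →
    ∀ m : C, IsGLB D m → m ≤ v → ∃ u ∈ D, u ⊓ w ≤ v

/-- `C` has an abundance of compact idempotents: every idempotent is an infimum
of compact idempotents. -/
def HasAbundantCompactIdem (C : Type*) [ECCone C] : Prop :=
  ∀ w : C, IsIdem w → ∃ D : Set C, (∀ v ∈ D, IsCompactIdem v) ∧ IsGLB D w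

/-- `C` is strongly connected: `{x : x ≤ w}` is connected for every idempotent `w`. -/
def StronglyConnected (C : Type*) [ECCone C] : Prop :=
  ∀ w : C, IsIdem w → IsConnected {x : C | x ≤ w}

/-- A linear function on a cone: additive, homogeneous, sending `0` to `0`. -/
def IsLinFun (f : C → ℝ≥0∞) : Prop :=
  f 0 = 0 ∧ (∀ x y : C, f (x + y) = f x + f y) ∧
    ∀ (t : PosReal) (x : C), f (psmul t x) = ENNReal.ofReal t.1 * f x

/-- Membership in `Lsc(C)`: linear and lower semicontinuous. -/
def MemLsc (f : C → ℝ≥0∞) : Prop := IsLinFun f ∧ LowerSemicontinuous f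

/-- Membership in `Lsc_σ(C)`: in `Lsc(C)` and `f⁻¹((a,∞])` is σ-compact for all `a < ∞`. -/
def MemLscSigma (f : C → ℝ≥0∞) : Prop :=
  MemLsc f ∧ ∀ a : ℝ≥0, IsSigmaCompact {x : C | (a : ℝ≥0∞) < f x}

/-- Membership in `A(C)`: linear and continuous. -/
def MemA (f : C → ℝ≥0∞) : Prop := IsLinFun f ∧ Continuous f

/-- `w = supp f`, the supremum of `{x : f x = 0}`. -/
def IsSupp (f : C → ℝ≥0∞) (w : C) : Prop := IsLUB {x : C | f x = 0} w

/-- The relation `f ◁ g`: `f ≤ (1-ε)g` for some `ε > 0`, and `f` is continuous at every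
point where `g` is finite. -/
def Lhd (f g : C → ℝ≥0∞) : Prop :=
  (∃ ε : ℝ, 0 < ε ∧ ∀ x, f x ≤ ENNReal.ofReal (1 - ε) * g x) ∧
    ∀ x : C, g x ≠ ⊤ → ContinuousAt f x

end ECCone

/-
For `x ∈ K` the set `F x = {z : z + ε x = z}` is closed. If `z ∈ K` absorbs finitely many
support idempotents `ε xᵢ` and `a ∈ K`, then the midpoint `z/2 + a/2 ∈ K` absorbs the `ε xᵢ`
and `ε a`, since an idempotent `w` satisfies `w/2 = w`. So the closed sets `K ∩ F x` have the
finite intersection property, and compactness gives `x₀ ∈ K` with `x₀ + ε x = x₀` for all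
`x ∈ K`, i.e. `ε x ≤ ε x₀`.
-/

namespace ECCone

variable {C : Type*} [ECCone C]

instance : CompactSpace C := compact

instance : T2Space C := t2

noncomputable def half : PosReal := ⟨1 / 2, by norm_num⟩

theorem half_add_half : half + half = 1 :=
  Subtype.ext (by norm_num [half])

theorem le_self_add (a b : C) : a ≤ a + b :=
  (le_iff_exists_add a (a + b)).2 ⟨b, rfl⟩

theorem IsSuppIdem.isIdem {x e : C} (h : IsSuppIdem x e) : IsIdem e := by
  have hx : x + (e + e) = x := by rw [← add_assoc, h.1, h.1]
  exact le_antisymm (h.2 _ hx) (le_self_add e e)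

theorem IsIdem.psmul_half {w : C} (hw : IsIdem w) : psmul half w = w :=
  calc psmul half w = psmul half (w + w) := by rw [hw]
    _ = psmul (half + half) w := by rw [psmul_add, add_psmul]
    _ = w := by rw [half_add_half, one_psmul]

theorem midpoint_add_idem_eq_self {w z : C} (hw : IsIdem w) (hz : z + w = z) (a : C) :
    psmul half z + psmul half a + w = psmul half z + psmul half a :=
  calc psmul half z + psmul half a + w = psmul half (z + w) + psmul half a := by
        rw [psmul_add, hw.psmul_half, add_right_comm]
    _ = psmul half z + psmul half a := by rw [hz]

theorem isClosed_setOf_add_eq_self (w : C) : IsClosed {z : C | z + w = z} :=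
  isClosed_eq (continuous_add'.comp (continuous_id.prodMk continuous_const)) continuous_id

theorem exists_mem_forall_add_suppIdem_eq {ε : C → C} (hε : ∀ x, IsSuppIdem x (ε x))
    {K : Set C} (hKne : K.Nonempty)
    (hKmid : ∀ x ∈ K, ∀ y ∈ K, psmul half x + psmul half y ∈ K) (u : Finset K) :
    ∃ z ∈ K, ∀ x ∈ u, z + ε x = z := by
  classical
  induction u using Finset.induction_on with
  | empty =>
    obtain ⟨z, hz⟩ := hKne
    exact ⟨z, hz, by simp⟩
  | insert a u _ ih =>
    obtain ⟨z, hzK, hzu⟩ := ih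
    refine ⟨psmul half z + psmul half a.1, hKmid z hzK a.1 a.2, ?_⟩
    intro x hx
    rcases Finset.mem_insert.1 hx with rfl | hx
    · rw [add_comm (psmul half z)]
      exact midpoint_add_idem_eq_self (hε x).isIdem (hε x).1 z
    · exact midpoint_add_idem_eq_self (hε x).isIdem (hzu x hx) a.1

end ECCone

/-- In an extended Choquet cone, the support-idempotent map attains a
maximum on every nonempty closed convex subset. -/
theorem stmt_2 {C : Type*} [ECCone C] (ε : C → C) (hε : ∀ x, ECCone.IsSuppIdem x (ε x))
    (K : Set C) (hKne : K.Nonempty) (hKcl : IsClosed K)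
    (hKcv : ∀ x ∈ K, ∀ y ∈ K, ∀ s t : PosReal, s.1 + t.1 = 1 →
      ECCone.psmul s x + ECCone.psmul t y ∈ K) :
    ∃ x₀ ∈ K, ∀ x ∈ K, ε x ≤ ε x₀ := by
  have hKmid : ∀ x ∈ K, ∀ y ∈ K, ECCone.psmul ECCone.half x + ECCone.psmul ECCone.half y ∈ K :=
    fun x hx y hy => hKcv x hx y hy _ _ (congrArg Subtype.val ECCone.half_add_half)
  obtain ⟨x₀, hx₀K, hx₀⟩ := hKcl.isCompact.inter_iInter_nonempty
    (fun x : K => {z : C | z + ε x = z}) (fun x => ECCone.isClosed_setOf_add_eq_self (ε x))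
    (fun u => by simpa [Set.nonempty_def] using
      ECCone.exists_mem_forall_add_suppIdem_eq hε hKne hKmid u)
  exact ⟨x₀, hx₀K, fun x hx => (hε x₀).2 _ (Set.mem_iInter.1 hx₀ ⟨x, hx⟩)⟩
end

section
/- Let I be an upward directed set, let (n_i)_{i∈I} be natural numbers, and for all i, j ∈ I with j ≤ i let φ_{i,j} : [0,∞]^{n_i} → [0,∞]^{n_j} be continuous linear maps such that φ_{i,i} = id and φ_{j,k} ∘ φ_{i,j} = φ_{i,k} whenever k ≤ j ≤ i. Let C = {(x_i)_i ∈ ∏_{i∈I} [0,∞]^{n_i} : φ_{i,j}(x_i) = x_j for all j ≤ i} with coordinatewise operations and the topology induced from the product topology (so that C is the projective limit of the system). Then C is strongly connected and has an abundance of compact idempotents. -/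
open scoped ENNReal NNReal

/-- The zero element of a cone, for an explicitly given `ECCone` structure. -/
def ECCone.zeroOf {C : Type*} (inst : ECCone C) : C := letI := inst; 0

/-- The addition of a cone, for an explicitly given `ECCone` structure. -/
def ECCone.addOf {C : Type*} (inst : ECCone C) (x y : C) : C := letI := inst; x + y

/-!
An idempotent of the limit has all coordinates in `{0, ∞}`, so it is determined by its supports,
and `x ≤ w` for an idempotent `w` says exactly that every support of `x` lies in that of `w`.
Each level has only finitely many supports, so a directed family of idempotents has an extremal
support at every level, and these glue to an idempotent of the limit. Hence an idempotent that is
the largest one with its level-`i` support is compact: a directed family whose infimum lies below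
it attains its least level-`i` support. Gluing, for each level `i`, the largest supports of the
idempotents whose level-`i` support lies in that of `w` gives such compact idempotents `uᵢ`,
with infimum `w`.

The set `{x ≤ w}` is the intersection of the directed family of compact sets of families that are
supported in `w` and compatible below a fixed level `i`. Each of these is a continuous image of
the connected product, and a directed intersection of compact connected sets is connected.
-/

open Set Topology

theorem Set.Finite.exists_isGreatest_of_directedOn {β : Type*} [PartialOrder β] {s : Set β}
    (hs : s.Finite) (hne : s.Nonempty) (hdir : DirectedOn (· ≤ ·) s) : ∃ a, IsGreatest s a := by
  obtain ⟨a, ha, hmax⟩ := hs.exists_maximal hne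
  refine ⟨a, ha, fun b hb => ?_⟩
  obtain ⟨c, hc, hac, hbc⟩ := hdir a ha b hb
  exact hbc.trans (hmax hc hac)

theorem Set.Finite.exists_isLeast_of_directedOn {β : Type*} [PartialOrder β] {s : Set β}
    (hs : s.Finite) (hne : s.Nonempty) (hdir : DirectedOn (· ≥ ·) s) : ∃ a, IsLeast s a :=
  Set.Finite.exists_isGreatest_of_directedOn (β := βᵒᵈ) hs hne hdir

theorem isPreconnected_iInter_of_directed {X ι : Type*} [TopologicalSpace X] [T2Space X]
    [Nonempty ι] {K : ι → Set X} (hdir : Directed (· ⊇ ·) K) (hcpt : ∀ i, IsCompact (K i))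
    (hconn : ∀ i, IsPreconnected (K i)) : IsPreconnected (⋂ i, K i) := by
  rw [isPreconnected_closed_iff]
  intro t t' ht ht' hcover ⟨x, hxK, hxt⟩ ⟨y, hyK, hyt'⟩
  by_contra hdisj
  obtain ⟨i₀⟩ := ‹Nonempty ι›
  have hK : IsCompact (⋂ i, K i) :=
    (hcpt i₀).of_isClosed_subset (isClosed_iInter fun i => (hcpt i).isClosed) (iInter_subset _ i₀)
  obtain ⟨U, V, hU, hV, htU, ht'V, hUV⟩ := SeparatedNhds.of_isCompact_isCompact
    (hK.inter_right ht) (hK.inter_right ht') <| disjoint_left.2 fun z ⟨hzK, hzt⟩ ⟨_, hzt'⟩ =>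
      hdisj ⟨z, hzK, hzt, hzt'⟩
  obtain ⟨i, hi⟩ := exists_subset_nhds_of_isCompact hdir hcpt (U := U ∪ V) fun z hz =>
    (hU.union hV).mem_nhds ((hcover hz).imp (fun h => htU ⟨hz, h⟩) (fun h => ht'V ⟨hz, h⟩))
  obtain ⟨z, -, hzU, hzV⟩ := hconn i U V hU hV hi ⟨x, mem_iInter.1 hxK i, htU ⟨hxK, hxt⟩⟩
    ⟨y, mem_iInter.1 hyK i, ht'V ⟨hyK, hyt'⟩⟩
  exact disjoint_left.1 hUV hzU hzV

theorem ECCone.IsIdem.add {C : Type*} [ECCone C] {v w : C} (hv : IsIdem v) (hw : IsIdem w) :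
    IsIdem (v + w) := by
  unfold IsIdem at *
  rw [add_add_add_comm, hv, hw]

section ProjectiveSystem

variable {ι : Type*} [Preorder ι] {n : ι → ℕ}
  {φ : ∀ i j, j ≤ i → (Fin (n i) → ℝ≥0∞) → (Fin (n j) → ℝ≥0∞)}

theorem isPreconnected_setOf_compatible_below
    (φ_cont : ∀ i j (h : j ≤ i), Continuous (φ i j h))
    (φ_id : ∀ i (h : i ≤ i) (x : Fin (n i) → ℝ≥0∞), φ i i h x = x)
    (A : ∀ i, Set (Fin (n i)))
    (hA : ∀ i j (h : j ≤ i) (a : Fin (n i) → ℝ≥0∞), (∀ k ∉ A i, a k = 0) →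
      ∀ k ∉ A j, φ i j h a k = 0) (i : ι) :
    IsPreconnected {x : ∀ i, Fin (n i) → ℝ≥0∞ |
      (∀ j (h : j ≤ i), φ i j h (x i) = x j) ∧ ∀ l, ∀ k ∉ A l, x l k = 0} := by
  classical
  let tr : ∀ l, (Fin (n l) → ℝ≥0∞) → Fin (n l) → ℝ≥0∞ := fun l a k => if k ∈ A l then a k else 0
  have htr_cont : ∀ l, Continuous (tr l) := fun l => continuous_pi fun k => by
    by_cases hk : k ∈ A l <;> simp only [tr, hk, if_true, if_false] <;> fun_prop
  have htr_supp : ∀ l a, ∀ k ∉ A l, tr l a k = 0 := fun l a k hk => if_neg hk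
  have htr_eq : ∀ l a, (∀ k ∉ A l, a k = 0) → tr l a = a := fun l a ha => funext fun k => by
    by_cases hk : k ∈ A l <;> simp [tr, hk, ha]
  -- `Ψ` truncates every level to its support `A` and then propagates level `i` downwards.
  let Ψ : (∀ i, Fin (n i) → ℝ≥0∞) → ∀ i, Fin (n i) → ℝ≥0∞ :=
    fun y j => if h : j ≤ i then φ i j h (tr i (y i)) else tr j (y j)
  have hΨ_cont : Continuous Ψ := continuous_pi fun j => by
    by_cases h : j ≤ i
    · simp only [Ψ, dif_pos h]
      exact (φ_cont i j h).comp ((htr_cont i).comp (continuous_apply i))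
    · simp only [Ψ, dif_neg h]
      exact (htr_cont j).comp (continuous_apply j)
  convert isPreconnected_range hΨ_cont using 1
  ext x
  constructor
  · rintro ⟨hcomp, hsupp⟩
    refine ⟨x, funext fun j => ?_⟩
    by_cases h : j ≤ i
    · simp only [Ψ, dif_pos h, htr_eq i (x i) (hsupp i), hcomp j h]
    · simp only [Ψ, dif_neg h, htr_eq j (x j) (hsupp j)]
  · rintro ⟨y, rfl⟩
    have hΨi : Ψ y i = tr i (y i) := by simp only [Ψ, dif_pos le_rfl, φ_id]
    refine ⟨fun j h => by simp only [hΨi, Ψ, dif_pos h], fun l k hk => ?_⟩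
    by_cases h : l ≤ i
    · simp only [Ψ, dif_pos h]
      exact hA i l h _ (htr_supp i _) k hk
    · simp only [Ψ, dif_neg h]
      exact htr_supp l _ k hk

theorem isPreconnected_setOf_compatible [IsDirected ι (· ≤ ·)]
    (φ_cont : ∀ i j (h : j ≤ i), Continuous (φ i j h))
    (φ_id : ∀ i (h : i ≤ i) (x : Fin (n i) → ℝ≥0∞), φ i i h x = x)
    (φ_comp : ∀ i j k (hij : j ≤ i) (hjk : k ≤ j) (x : Fin (n i) → ℝ≥0∞),
      φ j k hjk (φ i j hij x) = φ i k (hjk.trans hij) x)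
    (A : ∀ i, Set (Fin (n i)))
    (hA : ∀ i j (h : j ≤ i) (a : Fin (n i) → ℝ≥0∞), (∀ k ∉ A i, a k = 0) →
      ∀ k ∉ A j, φ i j h a k = 0) :
    IsPreconnected {x : ∀ i, Fin (n i) → ℝ≥0∞ |
      (∀ i j (h : j ≤ i), φ i j h (x i) = x j) ∧ ∀ l, ∀ k ∉ A l, x l k = 0} := by
  rcases isEmpty_or_nonempty ι with hι | hι
  · exact subsingleton_of_subsingleton.isPreconnected
  let S : ι → Set (∀ i, Fin (n i) → ℝ≥0∞) := fun i =>
    {x | (∀ j (h : j ≤ i), φ i j h (x i) = x j) ∧ ∀ l, ∀ k ∉ A l, x l k = 0}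
  have hS_anti : Antitone S := fun i i' hii' x ⟨hcomp, hsupp⟩ =>
    ⟨fun j h => by rw [← hcomp i hii', φ_comp, hcomp], hsupp⟩
  have hS_closed : ∀ i, IsClosed (S i) := fun i => by
    simp only [S, ofPred_and, ofPred_forall]
    exact (isClosed_iInter fun j => isClosed_iInter fun h => isClosed_eq (by fun_prop)
      (by fun_prop)).inter (isClosed_iInter fun l => isClosed_iInter fun k =>
        isClosed_iInter fun _ => isClosed_eq (by fun_prop) continuous_const)
  convert isPreconnected_iInter_of_directed hS_anti.directed_ge
    (fun i => (hS_closed i).isCompact)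
    (isPreconnected_setOf_compatible_below φ_cont φ_id A hA) using 1
  ext x
  simp only [S, mem_iInter, mem_ofPred_eq, forall_and, forall_const]

end ProjectiveSystem

-- A plain `def` rather than the subtype itself, so that `≤`, `+` and the topology on it can
-- only come from an `ECCone` instance.
def ProjLimit {ι : Type*} [Preorder ι] (n : ι → ℕ)
    (φ : ∀ i j, j ≤ i → (Fin (n i) → ℝ≥0∞) → (Fin (n j) → ℝ≥0∞)) : Type _ :=
  {x : ∀ i, Fin (n i) → ℝ≥0∞ // ∀ i j (h : j ≤ i), φ i j h (x i) = x j}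

namespace ProjLimit

variable {ι : Type*} [Preorder ι] {n : ι → ℕ}
  {φ : ∀ i j, j ≤ i → (Fin (n i) → ℝ≥0∞) → (Fin (n j) → ℝ≥0∞)}

def val (x : ProjLimit n φ) : ∀ i, Fin (n i) → ℝ≥0∞ := Subtype.val x

theorem val_compat (x : ProjLimit n φ) {i j : ι} (h : j ≤ i) : φ i j h (x.val i) = x.val j :=
  Subtype.property x i j h

theorem ext {x y : ProjLimit n φ} (h : ∀ i k, x.val i k = y.val i k) : x = y :=
  Subtype.ext (funext fun i => funext (h i))

def supp (x : ProjLimit n φ) (i : ι) : Set (Fin (n i)) := {k | x.val i k ≠ 0}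

def AddCoordwise (n : ι → ℕ) (φ : ∀ i j, j ≤ i → (Fin (n i) → ℝ≥0∞) → (Fin (n j) → ℝ≥0∞))
    [ECCone (ProjLimit n φ)] : Prop :=
  ∀ x y : ProjLimit n φ, ∀ i k, (x + y).val i k = x.val i k + y.val i k

variable [inst : ECCone (ProjLimit n φ)]

open ECCone

theorem supp_mono (hadd : AddCoordwise n φ) {x y : ProjLimit n φ} (h : x ≤ y) (i : ι) :
    x.supp i ⊆ y.supp i := by
  obtain ⟨z, rfl⟩ := (ECCone.le_iff_exists_add x y).1 h
  intro k hk
  rw [supp, mem_ofPred_eq, hadd x z i k]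
  exact fun h0 => hk (add_eq_zero.1 h0).1

theorem supp_add (hadd : AddCoordwise n φ) (x y : ProjLimit n φ) (i : ι) :
    (x + y).supp i = x.supp i ∪ y.supp i := by
  ext k
  simp only [supp, mem_ofPred_eq, mem_union, hadd x y i k, ne_eq, add_eq_zero, not_and_or]

theorem val_eq_top_of_isIdem (hadd : AddCoordwise n φ) {v : ProjLimit n φ} (hv : IsIdem v) {i : ι}
    {k : Fin (n i)} (hk : k ∈ v.supp i) : v.val i k = ⊤ := by
  by_contra hne
  have h := congrArg (fun x : ProjLimit n φ => x.val i k) hv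
  simp only [hadd v v i k] at h
  exact hk ((ENNReal.add_right_inj hne).1 (by rw [h, add_zero]))

theorem le_iff_supp_subset (hadd : AddCoordwise n φ) {x w : ProjLimit n φ} (hw : IsIdem w) :
    x ≤ w ↔ ∀ i, x.supp i ⊆ w.supp i := by
  refine ⟨fun h i => supp_mono hadd h i, fun h => (ECCone.le_iff_exists_add x w).2
    ⟨w, ext fun i k => ?_⟩⟩
  rw [hadd x w i k]
  by_cases hk : k ∈ w.supp i
  · rw [val_eq_top_of_isIdem hadd hw hk, add_top]
  · have hx : x.val i k = 0 := not_not.1 fun hx => hk (h i hx)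
    rw [hx, zero_add]

theorem exists_isIdem_supp_eq (hadd : AddCoordwise n φ) (A : ∀ i, Set (Fin (n i)))
    (hA : ∀ i j, j ≤ i → ∃ v : ProjLimit n φ, IsIdem v ∧ v.supp i = A i ∧ v.supp j = A j) :
    ∃ u : ProjLimit n φ, IsIdem u ∧ ∀ i, u.supp i = A i := by
  classical
  let a : ∀ i, Fin (n i) → ℝ≥0∞ := fun i k => if k ∈ A i then ⊤ else 0
  have ha : ∀ i j (h : j ≤ i), φ i j h (a i) = a j := by
    intro i j h
    obtain ⟨v, hv, hvi, hvj⟩ := hA i j h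
    have hva : ∀ l, v.supp l = A l → v.val l = a l := fun l hl => funext fun k => by
      by_cases hk : k ∈ A l
      · simp only [a, if_pos hk, val_eq_top_of_isIdem hadd hv (hl ▸ hk)]
      · simp only [a, if_neg hk]
        exact not_not.1 fun h => hk (hl ▸ h)
    rw [← hva i hvi, ← hva j hvj, v.val_compat]
  let u : ProjLimit n φ := ⟨a, ha⟩
  refine ⟨u, ext fun i k => ?_, fun i => ?_⟩
  · rw [hadd u u i k]
    change a i k + a i k = a i k
    by_cases hk : k ∈ A i <;> simp [a, hk]
  · ext k
    change a i k ≠ 0 ↔ k ∈ A i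
    by_cases hk : k ∈ A i <;> simp [a, hk]

theorem exists_isIdem_isGreatest_supp (hadd : AddCoordwise n φ) {S : Set (ProjLimit n φ)}
    (hS : ∀ v ∈ S, IsIdem v) (hne : S.Nonempty) (hdir : DirectedOn (· ≤ ·) S) :
    ∃ u : ProjLimit n φ, IsIdem u ∧ ∀ i, IsGreatest ((supp · i) '' S) (u.supp i) := by
  have hmax (i : ι) : ∃ A, IsGreatest ((supp · i) '' S) A :=
    (toFinite _).exists_isGreatest_of_directedOn (hne.image _)
      (directedOn_image.2 (hdir.mono fun _ _ h => supp_mono hadd h i))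
  choose A hA using hmax
  obtain ⟨u, hu, hsupp⟩ := exists_isIdem_supp_eq hadd A fun i j _ => by
    obtain ⟨⟨v, hv, hvi⟩, -⟩ := hA i
    obtain ⟨⟨v', hv', hv'j⟩, -⟩ := hA j
    obtain ⟨c, hc, hvc, hv'c⟩ := hdir v hv v' hv'
    exact ⟨c, hS c hc,
      ((hA i).2 ⟨c, hc, rfl⟩).antisymm (hvi.symm.trans_subset (supp_mono hadd hvc i)),
      ((hA j).2 ⟨c, hc, rfl⟩).antisymm (hv'j.symm.trans_subset (supp_mono hadd hv'c j))⟩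
  exact ⟨u, hu, fun i => hsupp i ▸ hA i⟩

theorem exists_isIdem_isLeast_supp (hadd : AddCoordwise n φ) {S : Set (ProjLimit n φ)}
    (hS : ∀ v ∈ S, IsIdem v) (hne : S.Nonempty) (hdir : DirectedOn (· ≥ ·) S) :
    ∃ u : ProjLimit n φ, IsIdem u ∧ ∀ i, IsLeast ((supp · i) '' S) (u.supp i) := by
  have hmin (i : ι) : ∃ A, IsLeast ((supp · i) '' S) A :=
    (toFinite _).exists_isLeast_of_directedOn (hne.image _)
      (directedOn_image.2 (hdir.mono fun _ _ h => supp_mono hadd h i))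
  choose A hA using hmin
  obtain ⟨u, hu, hsupp⟩ := exists_isIdem_supp_eq hadd A fun i j _ => by
    obtain ⟨⟨v, hv, hvi⟩, -⟩ := hA i
    obtain ⟨⟨v', hv', hv'j⟩, -⟩ := hA j
    obtain ⟨c, hc, hcv, hcv'⟩ := hdir v hv v' hv'
    exact ⟨c, hS c hc, ((supp_mono hadd hcv i).trans_eq hvi).antisymm ((hA i).2 ⟨c, hc, rfl⟩),
      ((supp_mono hadd hcv' j).trans_eq hv'j).antisymm ((hA j).2 ⟨c, hc, rfl⟩)⟩
  exact ⟨u, hu, fun i => hsupp i ▸ hA i⟩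

theorem isCompactIdem_of_forall_supp_subset (hadd : AddCoordwise n φ) {u : ProjLimit n φ}
    (hu : IsIdem u) (i : ι) (hmax : ∀ v, IsIdem v → v.supp i ⊆ u.supp i → v ≤ u) :
    IsCompactIdem u := by
  refine ⟨hu, fun D hne hD hdir m hm hmu => ?_⟩
  obtain ⟨z, -, hz⟩ := exists_isIdem_isLeast_supp hadd hD hne hdir
  have hzD : z ∈ lowerBounds D := fun v hv =>
    (le_iff_supp_subset hadd (hD v hv)).2 fun j => (hz j).2 ⟨v, hv, rfl⟩
  obtain ⟨v, hv, hvz⟩ := (hz i).1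
  exact ⟨v, hv, hmax v (hD v hv) (hvz.trans_subset (supp_mono hadd ((hm.2 hzD).trans hmu) i))⟩

theorem hasAbundantCompactIdem (hadd : AddCoordwise n φ) :
    HasAbundantCompactIdem (ProjLimit n φ) := by
  intro w hw
  let E : ι → Set (ProjLimit n φ) := fun i => {v | IsIdem v ∧ v.supp i ⊆ w.supp i}
  have hE (i : ι) : DirectedOn (· ≤ ·) (E i) := fun v hv v' hv' =>
    ⟨v + v', ⟨hv.1.add hv'.1, supp_add hadd v v' i ▸ union_subset hv.2 hv'.2⟩,
      (ECCone.le_iff_exists_add _ _).2 ⟨v', rfl⟩,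
      (ECCone.le_iff_exists_add _ _).2 ⟨v, add_comm _ _⟩⟩
  choose u hu hmax using fun i =>
    exists_isIdem_isGreatest_supp hadd (S := E i) (fun v hv => hv.1) ⟨w, hw, subset_rfl⟩ (hE i)
  have hsupp (i : ι) : (u i).supp i ⊆ w.supp i := by
    obtain ⟨v, hv, hvu⟩ := (hmax i i).1
    exact hvu ▸ hv.2
  have hle (i : ι) : ∀ v ∈ E i, v ≤ u i := fun v hv =>
    (le_iff_supp_subset hadd (hu i)).2 fun j => (hmax i j).2 ⟨v, hv, rfl⟩
  refine ⟨range u, ?_, ⟨?_, fun z hz => ?_⟩⟩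
  · rintro _ ⟨i, rfl⟩
    exact isCompactIdem_of_forall_supp_subset hadd (hu i) i fun v hv hvi =>
      hle i v ⟨hv, hvi.trans (hsupp i)⟩
  · rintro _ ⟨i, rfl⟩
    exact hle i w ⟨hw, subset_rfl⟩
  · exact (le_iff_supp_subset hadd hw).2 fun i => (supp_mono hadd (hz ⟨i, rfl⟩) i).trans (hsupp i)

theorem apply_eq_zero_of_notMem_supp
    (φ_add : ∀ i j (h : j ≤ i) (x y : Fin (n i) → ℝ≥0∞),
      φ i j h (x + y) = φ i j h x + φ i j h y)
    (hadd : AddCoordwise n φ) {w : ProjLimit n φ} (hw : IsIdem w) {i j : ι} (h : j ≤ i)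
    {a : Fin (n i) → ℝ≥0∞} (ha : ∀ k ∉ w.supp i, a k = 0) : ∀ k ∉ w.supp j, φ i j h a k = 0 := by
  have hsum : a + w.val i = w.val i := funext fun k => by
    by_cases hk : k ∈ w.supp i
    · rw [Pi.add_apply, val_eq_top_of_isIdem hadd hw hk, add_top]
    · rw [Pi.add_apply, ha k hk, zero_add]
  intro k hk
  have hφ := congrFun (φ_add i j h a (w.val i)) k
  rw [hsum, w.val_compat h, Pi.add_apply, not_not.1 hk, add_zero] at hφ
  exact hφ.symm

theorem stronglyConnected [IsDirected ι (· ≤ ·)]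
    (φ_cont : ∀ i j (h : j ≤ i), Continuous (φ i j h))
    (φ_add : ∀ i j (h : j ≤ i) (x y : Fin (n i) → ℝ≥0∞),
      φ i j h (x + y) = φ i j h x + φ i j h y)
    (φ_id : ∀ i (h : i ≤ i) (x : Fin (n i) → ℝ≥0∞), φ i i h x = x)
    (φ_comp : ∀ i j k (hij : j ≤ i) (hjk : k ≤ j) (x : Fin (n i) → ℝ≥0∞),
      φ j k hjk (φ i j hij x) = φ i k (hjk.trans hij) x)
    (hadd : AddCoordwise n φ)
    (htop : inst.toTopologicalSpace = TopologicalSpace.induced val inferInstance) :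
    StronglyConnected (ProjLimit n φ) := by
  intro w hw
  refine ⟨⟨w, le_rfl⟩, ?_⟩
  rw [← (⟨htop⟩ : IsInducing val).isPreconnected_image]
  convert isPreconnected_setOf_compatible φ_cont φ_id φ_comp w.supp
    fun i j h a ha => apply_eq_zero_of_notMem_supp φ_add hadd hw h ha using 1
  ext a
  constructor
  · rintro ⟨x, hx, rfl⟩
    exact ⟨fun i j h => x.val_compat h, fun l k hk => not_not.1 fun h => hk (supp_mono hadd hx l h)⟩
  · rintro ⟨hcomp, hsupp⟩
    refine ⟨⟨a, hcomp⟩, (le_iff_supp_subset hadd hw).2 fun l k hk => ?_, rfl⟩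
    by_contra hkw
    exact hk (hsupp l k hkw)

end ProjLimit

theorem stmt_6_general {ι : Type*} [Preorder ι] [IsDirected ι (· ≤ ·)] (n : ι → ℕ)
    (φ : ∀ i j, j ≤ i → (Fin (n i) → ℝ≥0∞) → (Fin (n j) → ℝ≥0∞))
    (φ_cont : ∀ i j (h : j ≤ i), Continuous (φ i j h))
    (φ_add : ∀ i j (h : j ≤ i) (x y : Fin (n i) → ℝ≥0∞),
      φ i j h (x + y) = φ i j h x + φ i j h y)
    (φ_id : ∀ i (h : i ≤ i) (x : Fin (n i) → ℝ≥0∞), φ i i h x = x)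
    (φ_comp : ∀ i j k (hij : j ≤ i) (hjk : k ≤ j) (x : Fin (n i) → ℝ≥0∞),
      φ j k hjk (φ i j hij x) = φ i k (hjk.trans hij) x)
    (inst : ECCone {x : ∀ i, Fin (n i) → ℝ≥0∞ // ∀ i j (h : j ≤ i), φ i j h (x i) = x j})
    (h_top : inst.toTopologicalSpace = instTopologicalSpaceSubtype)
    (h_add : ∀ x y : {x : ∀ i, Fin (n i) → ℝ≥0∞ // ∀ i j (h : j ≤ i), φ i j h (x i) = x j},
      (ECCone.addOf inst x y).1 = fun i k => x.1 i k + y.1 i k) :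
    (@ECCone.StronglyConnected _ inst) ∧ (@ECCone.HasAbundantCompactIdem _ inst) := by
  have hadd : @ProjLimit.AddCoordwise _ _ n φ inst := fun x y i k => congrFun₂ (h_add x y) i k
  exact ⟨ProjLimit.stronglyConnected (inst := inst) φ_cont φ_add φ_id φ_comp hadd h_top,
    ProjLimit.hasAbundantCompactIdem (inst := inst) hadd⟩

/-- A projective limit of cones of the form `[0,∞]^n` (with continuous
linear bonding maps over an upward directed index set), realized as the compatible families
in the product with coordinatewise operations and the induced product topology, is strongly
connected and has an abundance of compact idempotents (with respect to any extended Choquet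
cone structure on it with coordinatewise operations and the induced topology). -/
theorem stmt_6 {ι : Type*} [Preorder ι] [IsDirected ι (· ≤ ·)] (n : ι → ℕ)
    (φ : ∀ i j, j ≤ i → (Fin (n i) → ℝ≥0∞) → (Fin (n j) → ℝ≥0∞))
    (φ_cont : ∀ i j (h : j ≤ i), Continuous (φ i j h))
    (φ_add : ∀ i j (h : j ≤ i) (x y : Fin (n i) → ℝ≥0∞),
      φ i j h (x + y) = φ i j h x + φ i j h y)
    (φ_zero : ∀ i j (h : j ≤ i), φ i j h 0 = 0)
    (φ_smul : ∀ i j (h : j ≤ i) (t : PosReal) (x : Fin (n i) → ℝ≥0∞),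
      φ i j h (fun k => ENNReal.ofReal t.1 * x k) = fun k => ENNReal.ofReal t.1 * φ i j h x k)
    (φ_id : ∀ i (h : i ≤ i) (x : Fin (n i) → ℝ≥0∞), φ i i h x = x)
    (φ_comp : ∀ i j k (hij : j ≤ i) (hjk : k ≤ j) (x : Fin (n i) → ℝ≥0∞),
      φ j k hjk (φ i j hij x) = φ i k (hjk.trans hij) x)
    (inst : ECCone {x : ∀ i, Fin (n i) → ℝ≥0∞ // ∀ i j (h : j ≤ i), φ i j h (x i) = x j})
    (h_top : inst.toTopologicalSpace = instTopologicalSpaceSubtype)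
    (h_zero : (ECCone.zeroOf inst).1 = fun _ _ => 0)
    (h_add : ∀ x y : {x : ∀ i, Fin (n i) → ℝ≥0∞ // ∀ i j (h : j ≤ i), φ i j h (x i) = x j},
      (ECCone.addOf inst x y).1 = fun i k => x.1 i k + y.1 i k)
    (h_smul : ∀ (t : PosReal)
      (x : {x : ∀ i, Fin (n i) → ℝ≥0∞ // ∀ i j (h : j ≤ i), φ i j h (x i) = x j}),
      (ECCone.psmul (self := inst) t x).1 = fun i k => ENNReal.ofReal t.1 * x.1 i k) :
    (@ECCone.StronglyConnected _ inst) ∧ (@ECCone.HasAbundantCompactIdem _ inst) :=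
  stmt_6_general n φ φ_cont φ_add φ_id φ_comp inst h_top h_add
end
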